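/- Let p : ℕ⁺ → ℝ with p_n ≥ 0 and ∑_{n=1}^∞ p_n = 1, and suppose a : ℕ⁺ → ℝ is a strategy, i.e. a_n ≥ 0, ∑_{n=1}^∞ a_n = 1, and for every finite-cycle-permutation σ the set {n : a_n ≥ ∑_{m ∈ orbit_σ(n)} p_m} is infinite. Then for every permutation δ of the positive integers with a_{δ(n+1)} ≤ a_{δ(n)} for all n, one has ∑_{n=1}^∞ n·p_{δ(n)} < ∞. -/

import Mathlib

open scoped BigOperators ENNReal

/-- A permutation of the positive integers all of whose cycles (orbits) are finite. -/
def FiniteCycles (s : Equiv.Perm ℕ+) : Prop :=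
  ∀ n : ℕ+, {m : ℕ+ | s.SameCycle n m}.Finite

/-- The price of the cycle of `n` under the permutation `s`, for box prices `p`. -/
noncomputable def cyclePrice (s : Equiv.Perm ℕ+) (p : ℕ+ → ℝ) (n : ℕ+) : ℝ :=
  ∑' m : {m : ℕ+ | s.SameCycle n m}, p m

/-!
If `∑ n p_{δ n}` diverged, then with `q j = p (δ (j + 1))` and `b j = a (δ (j + 1))` the tails
`T i = ∑_{j ≥ i} q j` would satisfy `∑ T i = ∑ (j + 1) q j = ∞` while `∑ b i < ∞`, so `b i < T i`
for infinitely many `i`. Among these pick `φ 0 < φ 1 < ⋯` such that the `q`-mass of each block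
`[φ k, φ (k + 1))` exceeds `b (φ k)`, and let `σ` cycle through the `δ`-image of every block (and
of `[0, φ 0)`). As `b` is antitone, each prisoner of the block `[φ k, φ (k + 1))` holds an amount
at most `b (φ k)`, below the price of his cycle; so only the finitely many prisoners of
`[0, φ 0)` can succeed, contradicting the strategy property.
-/

open Filter Finset Topology

namespace Equiv.Perm

variable {α β ι : Type*}

theorem sameCycle_permCongr (e : α ≃ β) (f : Perm α) (x y : α) :
    (e.permCongr f).SameCycle (e x) (e y) ↔ f.SameCycle x y :=
  exists_congr fun z => by
    rw [← Equiv.permCongrHom_coe, ← map_zpow, Equiv.permCongrHom_coe, Equiv.permCongr_apply,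
      Equiv.symm_apply_apply, e.apply_eq_iff_eq]

theorem sameCycle_finRotate {n : ℕ} (x y : Fin n) : (finRotate n).SameCycle x y := by
  match n with
  | 0 => exact x.elim0
  | 1 => exact Subsingleton.elim x y ▸ .refl _ _
  | m + 2 =>
    have h (z : Fin (m + 2)) : finRotate (m + 2) z ≠ z := by
      rw [← mem_support, support_finRotate]; exact Finset.mem_univ z
    exact isCycle_finRotate.sameCycle (h x) (h y)

theorem exists_forall_sameCycle (α : Type*) [Finite α] :
    ∃ f : Perm α, ∀ x y, f.SameCycle x y := by
  obtain ⟨n, ⟨e⟩⟩ := Finite.exists_equiv_fin α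
  refine ⟨e.symm.permCongr (finRotate n), fun x y => ?_⟩
  rw [← e.symm_apply_apply x, ← e.symm_apply_apply y, sameCycle_permCongr]
  exact sameCycle_finRotate _ _

theorem exists_sameCycle_iff_eq (K : α → ι) (hK : ∀ i, (K ⁻¹' {i}).Finite) :
    ∃ f : Perm α, ∀ x y, f.SameCycle x y ↔ K x = K y := by
  have (i : ι) : Finite {a // K a = i} := (hK i).to_subtype
  choose c hc using fun i => exists_forall_sameCycle {a // K a = i}
  set f : Perm α := Equiv.ofFiberEquiv c
  have hf (i : ι) (a : α) : K (f a) = i ↔ K a = i := by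
    rw [show K (f a) = K a from Equiv.ofFiberEquiv_map c a]
  have hsub (i : ι) : f.subtypePerm (hf i) = c i := by
    ext ⟨a, rfl⟩
    rfl
  refine ⟨f, fun x y => ⟨fun ⟨z, hz⟩ => ?_, fun h => ?_⟩⟩
  · have hfiber := ((f.subtypePerm (p := (K · = K x)) (hf (K x)) ^ z) ⟨x, rfl⟩).2
    rw [subtypePerm_zpow] at hfiber
    rw [← hz]
    exact hfiber.symm
  · rw [← sameCycle_subtypePerm (p := (K · = K x)) (h := hf (K x)) (x := ⟨x, rfl⟩)
      (y := ⟨y, h.symm⟩), hsub]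
    exact hc _ _ _

end Equiv.Perm

theorem cyclePrice_eq_sum {σ : Equiv.Perm ℕ+} {p : ℕ+ → ℝ} {n : ℕ+} {s : Finset ℕ+}
    (h : ∀ m, σ.SameCycle n m ↔ m ∈ s) : cyclePrice σ p n = ∑ m ∈ s, p m := by
  have hs : {m | σ.SameCycle n m} = ↑s := Set.ext h
  rw [cyclePrice, hs, Finset.tsum_subtype']

section Blocks

variable {φ : ℕ → ℕ} (hφ : StrictMono φ)

noncomputable def blockIndex (n : ℕ) : ℕ :=
  Nat.find (hφ.tendsto_atTop.eventually_gt_atTop n).exists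

theorem lt_apply_blockIndex (n : ℕ) : n < φ (blockIndex hφ n) :=
  Nat.find_spec (hφ.tendsto_atTop.eventually_gt_atTop n).exists

theorem blockIndex_eq_succ_iff {n k : ℕ} :
    blockIndex hφ n = k + 1 ↔ n ∈ Ico (φ k) (φ (k + 1)) := by
  rw [blockIndex, Nat.find_eq_iff, mem_Ico, and_comm]
  refine and_congr_left fun _ => ⟨fun h => not_lt.1 (h k k.lt_succ_self), fun h j hj => ?_⟩
  exact not_lt.2 ((hφ.monotone (Nat.lt_succ_iff.1 hj)).trans h)

theorem finite_blockIndex_preimage (k : ℕ) : (blockIndex hφ ⁻¹' {k}).Finite :=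
  (Set.finite_Iio (φ k)).subset fun n hn => hn ▸ lt_apply_blockIndex hφ n

end Blocks

theorem Filter.extraction_rel_succ_of_frequently {P : ℕ → Prop} {R : ℕ → ℕ → Prop}
    (hP : ∃ᶠ n in atTop, P n) (hR : ∀ n, P n → ∀ᶠ m in atTop, R n m) :
    ∃ φ : ℕ → ℕ, StrictMono φ ∧ ∀ k, R (φ k) (φ (k + 1)) := by
  obtain ⟨n₀, hn₀⟩ := hP.exists
  have step (n : {n // P n}) : ∃ m : {m // P m}, n.1 < m.1 ∧ R n m := by
    obtain ⟨m, hm, hRm, hlt⟩ :=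
      (hP.and_eventually ((hR n n.2).and (eventually_gt_atTop n.1))).exists
    exact ⟨⟨m, hm⟩, hlt, hRm⟩
  choose next hlt hnext using step
  have hsucc (k : ℕ) : next^[k + 1] ⟨n₀, hn₀⟩ = next (next^[k] ⟨n₀, hn₀⟩) :=
    Function.iterate_succ_apply' ..
  refine ⟨fun k => (next^[k] ⟨n₀, hn₀⟩).1, strictMono_nat_of_lt_succ fun k => ?_, fun k => ?_⟩
  · simp only [hsucc, hlt]
  · simp only [hsucc, hnext]

section Tails

variable {q b : ℕ → ℝ}

theorem summable_succ_mul_of_summable_tail (hq : ∀ j, 0 ≤ q j) (hs : Summable q)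
    (hT : Summable fun i => ∑' j, q (j + i)) : Summable fun j : ℕ => ((j : ℝ) + 1) * q j := by
  refine summable_of_sum_range_le (c := ∑' i, ∑' j, q (j + i))
    (fun j => mul_nonneg (by positivity) (hq j)) fun N => ?_
  have hIco (i : ℕ) : ∑ j ∈ Ico i N, q j ≤ ∑' j, q (j + i) := by
    rw [sum_Ico_eq_sum_range]
    simp only [add_comm i]
    exact ((summable_nat_add_iff i).2 hs).sum_le_tsum _ fun j _ => hq _
  calc ∑ j ∈ range N, ((j : ℝ) + 1) * q j
      = ∑ i ∈ range N, ∑ j ∈ Ico i N, q j := by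
        rw [range_eq_Ico, sum_Ico_Ico_comm]
        simp [mul_comm]
    _ ≤ ∑ i ∈ range N, ∑' j, q (j + i) := sum_le_sum fun i _ => hIco i
    _ ≤ ∑' i, ∑' j, q (j + i) := hT.sum_le_tsum _ fun i _ => tsum_nonneg fun j => hq _

theorem frequently_lt_tail (hq : ∀ j, 0 ≤ q j) (hs : Summable q) (hb : Summable b)
    (h : ¬ Summable fun j : ℕ => ((j : ℝ) + 1) * q j) :
    ∃ᶠ i in atTop, b i < ∑' j, q (j + i) := by
  refine fun hle => h <|
    summable_succ_mul_of_summable_tail hq hs (hb.of_norm_bounded_eventually_nat ?_)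
  filter_upwards [hle] with i hi
  rw [Real.norm_of_nonneg (tsum_nonneg fun j => hq _)]
  exact not_lt.1 hi

theorem eventually_lt_sum_Ico (hs : Summable q) {c : ℝ} {i : ℕ} (h : c < ∑' j, q (j + i)) :
    ∀ᶠ m in atTop, c < ∑ j ∈ Ico i m, q j := by
  have hlim : Tendsto (fun m => ∑ j ∈ Ico i (m + i), q j) atTop (𝓝 (∑' j, q (j + i))) := by
    simp only [sum_Ico_eq_sum_range, Nat.add_sub_cancel, add_comm i]
    exact ((summable_nat_add_iff i).2 hs).hasSum.tendsto_sum_nat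
  exact (tendsto_add_atTop_iff_nat i).1 hlim |>.eventually (eventually_gt_nhds h)

theorem exists_strictMono_lt_sum_Ico (hq : ∀ j, 0 ≤ q j) (hs : Summable q) (hb : Summable b)
    (h : ¬ Summable fun j : ℕ => ((j : ℝ) + 1) * q j) :
    ∃ φ : ℕ → ℕ, StrictMono φ ∧ ∀ k, b (φ k) < ∑ j ∈ Ico (φ k) (φ (k + 1)), q j :=
  extraction_rel_succ_of_frequently (frequently_lt_tail hq hs hb h)
    fun _ hi => eventually_lt_sum_Ico hs hi

end Tails

theorem cyclePrice_eq_sum_Ico {φ : ℕ → ℕ} (hφ : StrictMono φ) (c : ℕ ≃ ℕ+)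
    {σ : Equiv.Perm ℕ+}
    (hσ : ∀ x y, σ.SameCycle x y ↔ blockIndex hφ (c.symm x) = blockIndex hφ (c.symm y))
    (p : ℕ+ → ℝ) {x : ℕ+} {k : ℕ} (hx : blockIndex hφ (c.symm x) = k + 1) :
    cyclePrice σ p x = ∑ j ∈ Ico (φ k) (φ (k + 1)), p (c j) := by
  rw [cyclePrice_eq_sum (s := (Ico (φ k) (φ (k + 1))).map c.toEmbedding), sum_map]
  · rfl
  · intro y
    rw [hσ, hx, eq_comm, blockIndex_eq_succ_iff, mem_map_equiv]

theorem stmt_11_general (p : ℕ+ → ℝ) (hp : ∀ n, 0 ≤ p n) (hpsum : HasSum p 1)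
    (a : ℕ+ → ℝ) (hasum : HasSum a 1)
    (hstrat : ∀ σ : Equiv.Perm ℕ+, FiniteCycles σ →
      {n : ℕ+ | cyclePrice σ p n ≤ a n}.Infinite) :
    ∀ δ : Equiv.Perm ℕ+, (∀ n : ℕ+, a (δ (n + 1)) ≤ a (δ n)) →
      Summable fun n : ℕ+ => (n : ℝ) * p (δ n) := by
  intro δ hδ
  set c : ℕ ≃ ℕ+ := Equiv.pnatEquivNat.symm.trans δ
  have hanti : Antitone (a ∘ c) := antitone_nat_of_succ_le fun j => hδ j.succPNat
  have hreindex : Summable (fun n : ℕ+ => (n : ℝ) * p (δ n)) ↔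
      Summable fun j : ℕ => ((j : ℝ) + 1) * p (c j) := by
    rw [← Equiv.pnatEquivNat.symm.summable_iff]
    simp [c, Function.comp_def]
  rw [hreindex]
  by_contra hdiv
  obtain ⟨φ, hφ, hblock⟩ := exists_strictMono_lt_sum_Ico (fun j => hp (c j))
    (c.summable_iff.2 hpsum.summable) (c.summable_iff.2 hasum.summable) hdiv
  set K : ℕ+ → ℕ := blockIndex hφ ∘ c.symm
  have hK (k : ℕ) : (K ⁻¹' {k}).Finite :=
    Set.Finite.preimage (f := c.symm) c.symm.injective.injOn (finite_blockIndex_preimage hφ k)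
  obtain ⟨σ, hσ⟩ := Equiv.Perm.exists_sameCycle_iff_eq K hK
  have hfin : FiniteCycles σ := fun x =>
    (hK (K x)).subset fun y hy => ((hσ x y).1 hy).symm
  refine hstrat σ hfin ((hK 0).subset fun x hx => ?_)
  by_contra h0
  obtain ⟨k, hk⟩ := Nat.exists_eq_succ_of_ne_zero h0
  have hlt : a x < cyclePrice σ p x := calc
    a x = a (c (c.symm x)) := by rw [c.apply_symm_apply]
    _ ≤ a (c (φ k)) := hanti (mem_Ico.1 ((blockIndex_eq_succ_iff hφ).1 hk)).1
    _ < ∑ j ∈ Ico (φ k) (φ (k + 1)), p (c j) := hblock k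
    _ = cyclePrice σ p x := (cyclePrice_eq_sum_Ico hφ c hσ p hk).symm
  exact not_le.2 hlt hx

theorem stmt_11 (p : ℕ+ → ℝ) (hp : ∀ n, 0 ≤ p n) (hpsum : HasSum p 1)
    (a : ℕ+ → ℝ) (ha : ∀ n, 0 ≤ a n) (hasum : HasSum a 1)
    (hstrat : ∀ σ : Equiv.Perm ℕ+, FiniteCycles σ →
      {n : ℕ+ | cyclePrice σ p n ≤ a n}.Infinite) :
    ∀ δ : Equiv.Perm ℕ+, (∀ n : ℕ+, a (δ (n + 1)) ≤ a (δ n)) →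
      Summable fun n : ℕ+ => (n : ℝ) * p (δ n) :=
  stmt_11_general p hp hpsum a hasum hstrat
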